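/- Fix non-negative integers n, m, k, l, t with max(k,l) ≤ t ≤ min(k+l, n, m). Define B(n,m,k,l,t) = ([n choose t][m choose t][t choose k][t choose l][n+m-t+2 choose n+m-k-l+2]) / ([n choose k][m choose k][n choose l][m choose l]), where [a choose b] denotes the balanced q-binomial. Then for t > l (and assuming k ≥ 1, l ≥ 1, t ≤ n-1, t ≤ m-1), the following recursion holds: ([n+m-l+2][l]/([n][m])) · ([n-1 choose t-1][m-1 choose t-1][t-1 choose k-1][t-1 choose l-1][n+m-t+1 choose n+m-k-l+2]) / ([n-1 choose k-1][m-1 choose k-1][n-1 choose l-1][m-1 choose l-1]) + ([n-l][m-l]/([n][m])) · ([n-1 choose t-1][m-1 choose t-1][t-1 choose k-1][t-1 choose l][n+m-t+1 choose n+m-k-l+1]) / ([n-1 choose k-1][m-1 choose k-1][n-1 choose l][m-1 choose l]) = ([n choose t][m choose t][t choose k][t choose l][n+m-t+2 choose n+m-k-l+2]) / ([n choose k][m choose k][n choose l][m choose l]), i.e. B(n,m,k,l,t) = ([n+m-l+2][l]/([n][m])) · B(n-1,m-1,k-1,l-1,t-1) + ([n-l][m-l]/([n][m])) · B(n-1,m-1,k-1,l,t-1).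 -/

import Mathlib

/-- The quantum integer `[k] = (u^k - u^{-k})/(u - u⁻¹)` where `u = q^{1/2}`. -/
noncomputable def qnum {F : Type*} [Field F] (u : F) (k : ℤ) : F :=
  (u ^ k - u ^ (-k)) / (u - u⁻¹)

/-- The quantum factorial `[k]! = ∏_{l=1}^k [l]`. -/
noncomputable def qfact {F : Type*} [Field F] (u : F) (k : ℕ) : F :=
  ∏ l ∈ Finset.Icc 1 k, qnum u (l : ℤ)

/-- The balanced q-binomial `[n choose k] = [n]!/([k]![n-k]!)`, `0` if `k > n`. -/
noncomputable def qbinom {F : Type*} [Field F] (u : F) (n k : ℕ) : F :=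
  if k ≤ n then qfact u n / (qfact u k * qfact u (n - k)) else 0

section Aux

variable {F : Type*} [Field F] (u : F)

lemma usub_ne (hu : u ≠ 0) (hroot : ∀ j : ℕ, 0 < j → (u ^ 2) ^ j ≠ 1) :
    u - u⁻¹ ≠ 0 := by
  have h := hroot 1 one_pos
  intro h0
  apply h
  have : u * (u - u⁻¹) = u^2 - 1 := by field_simp
  rw [h0, mul_zero] at this
  rw [pow_one]
  linear_combination -this

lemma qnum_ne_zero (hu : u ≠ 0) (hroot : ∀ j : ℕ, 0 < j → (u ^ 2) ^ j ≠ 1)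
    (j : ℤ) (hj : 0 < j) : qnum u j ≠ 0 := by
  unfold qnum
  apply div_ne_zero _ (usub_ne u hu hroot)
  intro h0
  apply hroot j.toNat (by omega)
  have hz : (u ^ 2) ^ (j.toNat) = u ^ (2 * j) := by
    rw [← zpow_natCast ((u^2)) j.toNat, ← zpow_natCast u 2, ← zpow_mul]
    congr 1
    omega
  have : u ^ j * (u ^ j - u ^ (-j)) = u ^ (2*j) - 1 := by
    rw [mul_sub, ← zpow_add₀ hu, ← zpow_add₀ hu]
    rw [add_neg_cancel, zpow_zero, two_mul]
  rw [h0, mul_zero] at this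
  rw [hz]
  linear_combination -this

lemma qfact_succ (a : ℕ) : qfact u (a + 1) = qfact u a * qnum u ((a : ℤ) + 1) := by
  unfold qfact
  rw [Finset.prod_Icc_succ_top (by omega)]
  push_cast
  ring

lemma qfact_ne_zero (hu : u ≠ 0) (hroot : ∀ j : ℕ, 0 < j → (u ^ 2) ^ j ≠ 1)
    (a : ℕ) : qfact u a ≠ 0 := by
  unfold qfact
  rw [Finset.prod_ne_zero_iff]
  intro i hi
  simp only [Finset.mem_Icc] at hi
  exact qnum_ne_zero u hu hroot i (by exact_mod_cast hi.1)

lemma absorb1 (hu : u ≠ 0) (hroot : ∀ j : ℕ, 0 < j → (u ^ 2) ^ j ≠ 1)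
    (a b : ℕ) (hb : 1 ≤ b) (hba : b ≤ a) :
    qnum u (b : ℤ) * qbinom u a b = qnum u (a : ℤ) * qbinom u (a - 1) (b - 1) := by
  obtain ⟨a', rfl⟩ : ∃ a', a = a' + 1 := ⟨a - 1, by omega⟩
  obtain ⟨b', rfl⟩ : ∃ b', b = b' + 1 := ⟨b - 1, by omega⟩
  unfold qbinom
  rw [if_pos hba, if_pos (by omega)]
  simp only [Nat.add_sub_cancel]
  have h1 : a' + 1 - (b' + 1) = a' - b' := by omega
  rw [h1, qfact_succ, qfact_succ]
  have f1 := qfact_ne_zero u hu hroot a'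
  have f2 := qfact_ne_zero u hu hroot b'
  have f3 := qfact_ne_zero u hu hroot (a' - b')
  have q1 := qnum_ne_zero u hu hroot ((b':ℤ)+1) (by omega)
  have q2 := qnum_ne_zero u hu hroot ((a':ℤ)+1) (by omega)
  push_cast
  field_simp

lemma absorb2 (hu : u ≠ 0) (hroot : ∀ j : ℕ, 0 < j → (u ^ 2) ^ j ≠ 1)
    (a b : ℕ) (ha : 1 ≤ a) (hba : b ≤ a) :
    qnum u ((a : ℤ) - (b : ℤ)) * qbinom u a b = qnum u (a : ℤ) * qbinom u (a - 1) b := by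
  obtain ⟨a', rfl⟩ : ∃ a', a = a' + 1 := ⟨a - 1, by omega⟩
  simp only [Nat.add_sub_cancel]
  rcases Nat.lt_or_ge a' b with hc | hc
  · have hb : b = a' + 1 := by omega
    subst hb
    unfold qbinom
    rw [if_pos le_rfl, if_neg (by omega)]
    simp only [mul_zero]
    have : ((a' : ℤ) + 1) - ((a' : ℤ) + 1) = 0 := by ring
    push_cast
    rw [this]
    unfold qnum
    simp
  · unfold qbinom
    rw [if_pos hba, if_pos hc]
    have h1 : a' + 1 - b = (a' - b) + 1 := by omega
    rw [h1, qfact_succ, qfact_succ]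
    have f1 := qfact_ne_zero u hu hroot a'
    have f2 := qfact_ne_zero u hu hroot b
    have f3 := qfact_ne_zero u hu hroot (a' - b)
    have h2 : ((a' : ℤ) + 1) - (b : ℤ) = ((a' - b : ℕ) : ℤ) + 1 := by
      push_cast [Nat.cast_sub hc]; ring
    have q2 := qnum_ne_zero u hu hroot ((a':ℤ)+1) (by omega)
    have q1 : qnum u ((a':ℤ) + 1 - (b:ℤ)) ≠ 0 := by
      apply qnum_ne_zero u hu hroot
      omega
    rw [show ((a' - b : ℕ):ℤ) + 1 = (a':ℤ) + 1 - (b:ℤ) by omega]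
    push_cast
    field_simp

lemma absorb1' (hu : u ≠ 0) (hroot : ∀ j : ℕ, 0 < j → (u ^ 2) ^ j ≠ 1)
    (a b : ℕ) (hb : 1 ≤ b) (hba : b ≤ a) :
    qbinom u (a - 1) (b - 1) = qnum u (b : ℤ) * qbinom u a b / qnum u (a : ℤ) := by
  have ha : qnum u (a : ℤ) ≠ 0 := qnum_ne_zero u hu hroot _ (by exact_mod_cast by omega)
  rw [eq_div_iff ha, mul_comm _ (qnum u (a:ℤ)), absorb1 u hu hroot a b hb hba]

lemma absorb2' (hu : u ≠ 0) (hroot : ∀ j : ℕ, 0 < j → (u ^ 2) ^ j ≠ 1)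
    (a b : ℕ) (ha1 : 1 ≤ a) (hba : b ≤ a) :
    qbinom u (a - 1) b = qnum u ((a : ℤ) - (b : ℤ)) * qbinom u a b / qnum u (a : ℤ) := by
  have ha : qnum u (a : ℤ) ≠ 0 := qnum_ne_zero u hu hroot _ (by exact_mod_cast by omega)
  rw [eq_div_iff ha, mul_comm _ (qnum u (a:ℤ)), absorb2 u hu hroot a b ha1 hba]

lemma qbinom_ne_zero (hu : u ≠ 0) (hroot : ∀ j : ℕ, 0 < j → (u ^ 2) ^ j ≠ 1)
    (a b : ℕ) (hba : b ≤ a) : qbinom u a b ≠ 0 := by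
  unfold qbinom
  rw [if_pos hba]
  exact div_ne_zero (qfact_ne_zero u hu hroot a)
    (mul_ne_zero (qfact_ne_zero u hu hroot b) (qfact_ne_zero u hu hroot (a-b)))

lemma key_identity (hu : u ≠ 0) (hroot : ∀ j : ℕ, 0 < j → (u ^ 2) ^ j ≠ 1)
    (N M K L T : ℤ) :
    qnum u (N + M - L + 2) * qnum u (K + L - T) + qnum u (T - L) * qnum u (N + M - K - L + 2)
      = qnum u K * qnum u (N + M - T + 2) := by
  have expand : ∀ a b : ℤ, (u^a - u^(-a)) * (u^b - u^(-b))
      = u^(a+b) - u^(a-b) - u^(b-a) + u^(-(a+b)) := by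
    intro a b
    rw [sub_mul, mul_sub, mul_sub, ← zpow_add₀ hu, ← zpow_add₀ hu, ← zpow_add₀ hu,
      ← zpow_add₀ hu]
    rw [show a + -b = a - b by ring, show -a + b = b - a by ring,
      show -a + -b = -(a+b) by ring]
    ring
  unfold qnum
  rw [div_mul_div_comm, div_mul_div_comm, div_mul_div_comm, ← add_div]
  congr 1
  rw [expand, expand, expand]
  ring

end Aux

/-- Recursion for the coefficients of the A₂ bubble skein expansion formula, in the
range `max(k,l) ≤ t ≤ min(k+l,n,m)`, `t > l`, `k,l ≥ 1`, `t ≤ n-1`, `t ≤ m-1`. -/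
theorem bubble_coefficient_recursion {F : Type*} [Field F] (u : F) (hu : u ≠ 0)
    (hroot : ∀ j : ℕ, 0 < j → (u ^ 2) ^ j ≠ 1)
    (n m k l t : ℕ) (hk1 : 1 ≤ k) (hl1 : 1 ≤ l) (hkt : k ≤ t) (hlt : l < t)
    (htkl : t ≤ k + l) (htn : t + 1 ≤ n) (htm : t + 1 ≤ m) :
    (qnum u ((n : ℤ) + (m : ℤ) - (l : ℤ) + 2) * qnum u (l : ℤ) /
        (qnum u (n : ℤ) * qnum u (m : ℤ))) *
      (qbinom u (n - 1) (t - 1) * qbinom u (m - 1) (t - 1) * qbinom u (t - 1) (k - 1) *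
          qbinom u (t - 1) (l - 1) * qbinom u (n + m - t + 1) (n + m - k - l + 2) /
        (qbinom u (n - 1) (k - 1) * qbinom u (m - 1) (k - 1) * qbinom u (n - 1) (l - 1) *
          qbinom u (m - 1) (l - 1))) +
    (qnum u ((n : ℤ) - (l : ℤ)) * qnum u ((m : ℤ) - (l : ℤ)) /
        (qnum u (n : ℤ) * qnum u (m : ℤ))) *
      (qbinom u (n - 1) (t - 1) * qbinom u (m - 1) (t - 1) * qbinom u (t - 1) (k - 1) *
          qbinom u (t - 1) l * qbinom u (n + m - t + 1) (n + m - k - l + 1) /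
        (qbinom u (n - 1) (k - 1) * qbinom u (m - 1) (k - 1) * qbinom u (n - 1) l *
          qbinom u (m - 1) l)) =
    qbinom u n t * qbinom u m t * qbinom u t k * qbinom u t l *
        qbinom u (n + m - t + 2) (n + m - k - l + 2) /
      (qbinom u n k * qbinom u m k * qbinom u n l * qbinom u m l) := by
  -- rewrite index forms
  rw [show n + m - t + 1 = (n + m - t + 2) - 1 from by omega,
      show n + m - k - l + 1 = (n + m - k - l + 2) - 1 from by omega]
  rw [absorb1' u hu hroot n t (by omega) (by omega),
      absorb1' u hu hroot m t (by omega) (by omega),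
      absorb1' u hu hroot t k (by omega) (by omega),
      absorb1' u hu hroot t l (by omega) (by omega),
      absorb2' u hu hroot (n + m - t + 2) (n + m - k - l + 2) (by omega) (by omega),
      absorb1' u hu hroot (n + m - t + 2) (n + m - k - l + 2) (by omega) (by omega),
      absorb2' u hu hroot t l (by omega) (by omega),
      absorb1' u hu hroot n k (by omega) (by omega),
      absorb1' u hu hroot m k (by omega) (by omega),
      absorb1' u hu hroot n l (by omega) (by omega),
      absorb1' u hu hroot m l (by omega) (by omega),
      absorb2' u hu hroot n l (by omega) (by omega),
      absorb2' u hu hroot m l (by omega) (by omega)]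
  rw [show ((n + m - t + 2 : ℕ) : ℤ) = (n:ℤ) + (m:ℤ) - (t:ℤ) + 2 from by omega,
      show ((n + m - k - l + 2 : ℕ) : ℤ) = (n:ℤ) + (m:ℤ) - (k:ℤ) - (l:ℤ) + 2 from by omega]
  rw [show (n:ℤ) + (m:ℤ) - (t:ℤ) + 2 - ((n:ℤ) + (m:ℤ) - (k:ℤ) - (l:ℤ) + 2)
        = (k:ℤ) + (l:ℤ) - (t:ℤ) from by ring]
  have key := key_identity u hu hroot (n:ℤ) (m:ℤ) (k:ℤ) (l:ℤ) (t:ℤ)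
  have qn : qnum u (n:ℤ) ≠ 0 := qnum_ne_zero u hu hroot _ (by omega)
  have qm : qnum u (m:ℤ) ≠ 0 := qnum_ne_zero u hu hroot _ (by omega)
  have qt : qnum u (t:ℤ) ≠ 0 := qnum_ne_zero u hu hroot _ (by omega)
  have qk : qnum u (k:ℤ) ≠ 0 := qnum_ne_zero u hu hroot _ (by omega)
  have ql : qnum u (l:ℤ) ≠ 0 := qnum_ne_zero u hu hroot _ (by omega)
  have qS : qnum u ((n:ℤ) + (m:ℤ) - (t:ℤ) + 2) ≠ 0 := qnum_ne_zero u hu hroot _ (by omega)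
  have qnl : qnum u ((n:ℤ) - (l:ℤ)) ≠ 0 := qnum_ne_zero u hu hroot _ (by omega)
  have qml : qnum u ((m:ℤ) - (l:ℤ)) ≠ 0 := qnum_ne_zero u hu hroot _ (by omega)
  have bnk : qbinom u n k ≠ 0 := qbinom_ne_zero u hu hroot n k (by omega)
  have bmk : qbinom u m k ≠ 0 := qbinom_ne_zero u hu hroot m k (by omega)
  have bnl : qbinom u n l ≠ 0 := qbinom_ne_zero u hu hroot n l (by omega)
  have bml : qbinom u m l ≠ 0 := qbinom_ne_zero u hu hroot m l (by omega)
  field_simp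
  have hD1 : qnum u (n:ℤ) * qnum u (m:ℤ) *
      (qnum u (n:ℤ) * qnum u (m:ℤ) * qnum u (t:ℤ) * qnum u (t:ℤ) * qnum u ((n:ℤ) + (m:ℤ) - (t:ℤ) + 2) *
        (qnum u (k:ℤ) * qbinom u n k * (qnum u (k:ℤ) * qbinom u m k) * (qnum u (l:ℤ) * qbinom u n l) *
          (qnum u (l:ℤ) * qbinom u m l))) ≠ 0 := by
    repeat' apply mul_ne_zero
    all_goals assumption
  have hD2 : qnum u (n:ℤ) * qnum u (m:ℤ) *
      (qnum u (n:ℤ) * qnum u (m:ℤ) * qnum u (t:ℤ) * qnum u (t:ℤ) * qnum u ((n:ℤ) + (m:ℤ) - (t:ℤ) + 2) *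
        (qnum u (k:ℤ) * qbinom u n k * (qnum u (k:ℤ) * qbinom u m k) * (qnum u ((n:ℤ) - (l:ℤ)) * qbinom u n l) *
          (qnum u ((m:ℤ) - (l:ℤ)) * qbinom u m l))) ≠ 0 := by
    repeat' apply mul_ne_zero
    all_goals assumption
  linear_combination (qbinom u n t * qbinom u m t * qbinom u t k * qbinom u t l *
    qbinom u (n+m-t+2) (n+m-k-l+2)) * key
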